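/- Let Λ be a Hermitian operator on ℂ^{d_A} ⊗ ℂ^{d_B} with Λ^Γ = Λ and Tr|Λ| ≤ 1, and let H be Hermitian with H + H^Γ = Λ. Define H' = (1/2)(H ⊗ Λ + Λ ⊗ H) on the doubled bipartite system (with Γ acting on both B factors). Then H' + H'^Γ = Λ ⊗ Λ and Tr|H'| ≤ Tr|H|. -/

import Mathlib

/-!
Partial transposition is linear and satisfies `(X ⊗ Y)^Γ = X^Γ ⊗ Y^Γ`, which gives the identity.
For the bound, `Tr|·|` is absolutely homogeneous, multiplicative on Kronecker products
(`|A ⊗ B| = |A| ⊗ |B|` by uniqueness of positive square roots) and subadditive, so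
`Tr|H'| ≤ Tr|H| · Tr|Λ| ≤ Tr|H|`. Subadditivity comes from the variational description
`Tr|M| = max ∑ᵢ Re ⟪uᵢ, M vᵢ⟫` over orthonormal families `v` and Bessel families `u`: the bound
`≤` is Cauchy–Schwarz in an eigenbasis of `Mᴴ M`, and the maximum is attained at the singular
vectors of `M`.
-/

open Matrix Kronecker ComplexOrder

/-- Partial transposition on the second tensor factor. -/
def ptrans {a b : Type*} (M : Matrix (a × b) (a × b) ℂ) : Matrix (a × b) (a × b) ℂ :=
  fun p q => M (p.1, q.2) (q.1, p.2)

/-- Partial transposition of both B factors on the doubled bipartite system. -/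
def ptrans2 {a b : Type*}
    (M : Matrix ((a × b) × (a × b)) ((a × b) × (a × b)) ℂ) :
    Matrix ((a × b) × (a × b)) ((a × b) × (a × b)) ℂ :=
  fun p q => M ((p.1.1, q.1.2), (p.2.1, q.2.2)) ((q.1.1, p.1.2), (q.2.1, p.2.2))

/-- The trace norm Tr|H| = Tr √(Hᴴ H). -/
noncomputable def trN {n : Type*} [Fintype n] [DecidableEq n] (H : Matrix n n ℂ) : ℝ :=
  (((Matrix.posSemidef_conjTranspose_mul_self H).1.eigenvectorUnitary.1 *
      diagonal (((↑) : ℝ → ℂ) ∘ (√·) ∘ (Matrix.posSemidef_conjTranspose_mul_self H).1.eigenvalues) *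
      (star (Matrix.posSemidef_conjTranspose_mul_self H).1.eigenvectorUnitary : Matrix n n ℂ)).trace).re

open scoped InnerProductSpace MatrixOrder

lemma sum_norm_inner_sq_le_of_orthogonal {𝕜 E ι : Type*} [RCLike 𝕜] [NormedAddCommGroup E]
    [InnerProductSpace 𝕜 E] [Fintype ι] {u : ι → E}
    (horth : Pairwise fun i j => ⟪u i, u j⟫_𝕜 = 0) (hnorm : ∀ i, u i ≠ 0 → ‖u i‖ = 1) (x : E) :
    ∑ i, ‖⟪u i, x⟫_𝕜‖ ^ 2 ≤ ‖x‖ ^ 2 := by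
  classical
  have hon : Orthonormal 𝕜 fun i : {i // u i ≠ 0} => u i :=
    ⟨fun i => hnorm i i.2, fun _ _ hij => horth (Subtype.coe_injective.ne hij)⟩
  calc ∑ i, ‖⟪u i, x⟫_𝕜‖ ^ 2 = ∑ i ∈ Finset.univ.filter (u · ≠ 0), ‖⟪u i, x⟫_𝕜‖ ^ 2 :=
        (Finset.sum_filter_of_ne fun i _ hi hzero => by simp [hzero] at hi).symm
    _ = ∑ i : {i // u i ≠ 0}, ‖⟪u i, x⟫_𝕜‖ ^ 2 := Finset.sum_subtype _ (by simp) _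
    _ ≤ ‖x‖ ^ 2 := hon.sum_inner_products_le x

section TraceNorm

variable {n m : Type*} [Fintype n] [DecidableEq n] [Fintype m] [DecidableEq m]

lemma trN_eq_sum_sqrt_eigenvalues (M : Matrix n n ℂ) :
    trN M = ∑ i, √((isHermitian_conjTranspose_mul_self M).eigenvalues i) := by
  rw [trN, trace_mul_cycle, Unitary.coe_star_mul_self, one_mul, trace_diagonal, Complex.re_sum]
  rfl

lemma trN_nonneg (M : Matrix n n ℂ) : 0 ≤ trN M := by
  rw [trN_eq_sum_sqrt_eigenvalues]
  exact Finset.sum_nonneg fun i _ => Real.sqrt_nonneg _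

lemma trN_eq_re_trace_cfcAbs (M : Matrix n n ℂ) : trN M = (CFC.abs M).trace.re := by
  have hM := Matrix.posSemidef_conjTranspose_mul_self M
  rw [CFC.abs, star_eq_conjTranspose, CFC.sqrt_eq_cfc, cfc_nnreal_eq_real _ _ hM.nonneg,
    hM.1.cfc_eq]
  simp only [IsHermitian.cfc, Unitary.conjStarAlgAut_apply, trN]
  congr 5 with i
  simp [max_eq_left (hM.eigenvalues_nonneg i)]

lemma trN_smul (c : ℂ) (M : Matrix n n ℂ) : trN (c • M) = ‖c‖ * trN M := by
  simp [trN_eq_re_trace_cfcAbs, CFC.abs_smul]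

lemma cfcAbs_kronecker (A : Matrix n n ℂ) (B : Matrix m m ℂ) :
    CFC.abs (A ⊗ₖ B) = CFC.abs A ⊗ₖ CFC.abs B := by
  refine CFC.sqrt_unique ?_
    ((CFC.abs_nonneg A).posSemidef.kronecker (CFC.abs_nonneg B).posSemidef).nonneg
  rw [← mul_kronecker_mul, CFC.abs_mul_abs, CFC.abs_mul_abs, star_eq_conjTranspose,
    star_eq_conjTranspose, star_eq_conjTranspose, conjTranspose_kronecker, mul_kronecker_mul]

lemma im_trace_cfcAbs (M : Matrix n n ℂ) : (CFC.abs M).trace.im = 0 :=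
  ((CFC.abs_nonneg M).posSemidef.trace_nonneg).2.symm ▸ rfl

lemma trN_kronecker (A : Matrix n n ℂ) (B : Matrix m m ℂ) : trN (A ⊗ₖ B) = trN A * trN B := by
  simp [trN_eq_re_trace_cfcAbs, cfcAbs_kronecker, trace_kronecker, Complex.mul_re,
    im_trace_cfcAbs]

lemma inner_toEuclideanLin_eigenvectorBasis {M : Matrix n n ℂ} (hM : (Mᴴ * M).IsHermitian)
    (i j : n) :
    ⟪M.toEuclideanLin (hM.eigenvectorBasis i), M.toEuclideanLin (hM.eigenvectorBasis j)⟫_ℂ =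
      if i = j then (hM.eigenvalues i : ℂ) else 0 := by
  have hMM : Mᴴ.toEuclideanLin (M.toEuclideanLin (hM.eigenvectorBasis j)) =
      (hM.eigenvalues j : ℂ) • hM.eigenvectorBasis j := by
    ext k
    simpa [mulVec_mulVec, Complex.real_smul] using congrFun (hM.mulVec_eigenvectorBasis j) k
  rw [← LinearMap.adjoint_inner_right, ← toEuclideanLin_conjTranspose_eq_adjoint, hMM,
    inner_smul_right, orthonormal_iff_ite.mp hM.eigenvectorBasis.orthonormal]
  split_ifs with h <;> simp [h]

lemma norm_toEuclideanLin_eigenvectorBasis {M : Matrix n n ℂ} (hM : (Mᴴ * M).IsHermitian)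
    (i : n) : ‖M.toEuclideanLin (hM.eigenvectorBasis i)‖ = √(hM.eigenvalues i) := by
  have h' : ‖M.toEuclideanLin (hM.eigenvectorBasis i)‖ ^ 2 = hM.eigenvalues i := by
    rw [← inner_self_eq_norm_sq (𝕜 := ℂ), inner_toEuclideanLin_eigenvectorBasis, if_pos rfl]
    exact Complex.ofReal_re _
  rw [← h', Real.sqrt_sq (norm_nonneg _)]

lemma sum_norm_inner_toEuclideanLin_le_trN {ι : Type*} [Fintype ι] (M : Matrix n n ℂ)
    {u v : ι → EuclideanSpace ℂ n} (hu : ∀ x, ∑ i, ‖⟪u i, x⟫_ℂ‖ ^ 2 ≤ ‖x‖ ^ 2)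
    (hv : Orthonormal ℂ v) :
    ∑ i, ‖⟪u i, M.toEuclideanLin (v i)⟫_ℂ‖ ≤ trN M := by
  set hM := isHermitian_conjTranspose_mul_self M
  set w := hM.eigenvectorBasis
  have hexpand : ∀ i, ⟪u i, M.toEuclideanLin (v i)⟫_ℂ =
      ∑ k, ⟪w k, v i⟫_ℂ * ⟪u i, M.toEuclideanLin (w k)⟫_ℂ := fun i => by
    conv_lhs => rw [← w.sum_repr' (v i)]
    simp only [map_sum, map_smul, inner_sum, inner_smul_right]
  have hcoeff : ∀ k, ∑ i, ‖⟪w k, v i⟫_ℂ‖ ^ 2 ≤ 1 := fun k => by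
    simpa [norm_inner_symm, w.orthonormal.1 k] using hv.sum_inner_products_le (w k)
  have himage : ∀ k, ∑ i, ‖⟪u i, M.toEuclideanLin (w k)⟫_ℂ‖ ^ 2 ≤ hM.eigenvalues k := fun k =>
    (hu _).trans_eq <| by
      rw [norm_toEuclideanLin_eigenvectorBasis,
        Real.sq_sqrt (eigenvalues_conjTranspose_mul_self_nonneg M k)]
  calc ∑ i, ‖⟪u i, M.toEuclideanLin (v i)⟫_ℂ‖
      ≤ ∑ i, ∑ k, ‖⟪w k, v i⟫_ℂ‖ * ‖⟪u i, M.toEuclideanLin (w k)⟫_ℂ‖ := by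
        gcongr with i
        rw [hexpand i]
        exact (norm_sum_le _ _).trans_eq (by simp only [norm_mul])
    _ = ∑ k, ∑ i, ‖⟪w k, v i⟫_ℂ‖ * ‖⟪u i, M.toEuclideanLin (w k)⟫_ℂ‖ := Finset.sum_comm
    _ ≤ ∑ k, √1 * √(hM.eigenvalues k) := by
        gcongr with k
        exact (Real.sum_mul_le_sqrt_mul_sqrt _ _ _).trans (by gcongr; exacts [hcoeff k, himage k])
    _ = trN M := by simp [trN_eq_sum_sqrt_eigenvalues]

lemma exists_trN_eq_sum_re_inner (M : Matrix n n ℂ) :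
    ∃ u v : n → EuclideanSpace ℂ n, (∀ x, ∑ i, ‖⟪u i, x⟫_ℂ‖ ^ 2 ≤ ‖x‖ ^ 2) ∧
      Orthonormal ℂ v ∧ trN M = ∑ i, (⟪u i, M.toEuclideanLin (v i)⟫_ℂ).re := by
  set hM := isHermitian_conjTranspose_mul_self M
  set v := hM.eigenvectorBasis
  set s : n → ℝ := fun i => √(hM.eigenvalues i)
  -- the left singular vectors; `0⁻¹ = 0` makes them vanish where the singular value does
  refine ⟨fun i => ((s i : ℂ))⁻¹ • M.toEuclideanLin (v i), v, ?_, v.orthonormal, ?_⟩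
  · refine sum_norm_inner_sq_le_of_orthogonal (fun i j hij => ?_) (fun i hi => ?_)
    · simp [inner_smul_left, inner_smul_right, inner_toEuclideanLin_eigenvectorBasis, hij, v]
    · have hs : s i ≠ 0 := fun h => hi (by simp [h])
      rw [norm_smul, norm_toEuclideanLin_eigenvectorBasis, norm_inv, Complex.norm_real,
        Real.norm_of_nonneg (Real.sqrt_nonneg _)]
      exact inv_mul_cancel₀ hs
  · rw [trN_eq_sum_sqrt_eigenvalues]
    refine Finset.sum_congr rfl fun i _ => ?_
    rw [inner_smul_left, inner_toEuclideanLin_eigenvectorBasis, if_pos rfl, ← Complex.ofReal_inv,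
      Complex.conj_ofReal, ← Complex.ofReal_mul, Complex.ofReal_re, inv_mul_eq_div, Real.div_sqrt]

lemma trN_add_le (A B : Matrix n n ℂ) : trN (A + B) ≤ trN A + trN B := by
  obtain ⟨u, v, hu, hv, h⟩ := exists_trN_eq_sum_re_inner (A + B)
  calc trN (A + B)
      = ∑ i, (⟪u i, A.toEuclideanLin (v i)⟫_ℂ).re +
          ∑ i, (⟪u i, B.toEuclideanLin (v i)⟫_ℂ).re := by
        simp [h, Finset.sum_add_distrib]
    _ ≤ ∑ i, ‖⟪u i, A.toEuclideanLin (v i)⟫_ℂ‖ + ∑ i, ‖⟪u i, B.toEuclideanLin (v i)⟫_ℂ‖ := by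
        gcongr <;> exact Complex.re_le_norm _
    _ ≤ trN A + trN B := add_le_add (sum_norm_inner_toEuclideanLin_le_trN A hu hv)
        (sum_norm_inner_toEuclideanLin_le_trN B hu hv)

end TraceNorm

section PartialTranspose

variable {a b : Type*}

lemma ptrans2_add (X Y : Matrix ((a × b) × (a × b)) ((a × b) × (a × b)) ℂ) :
    ptrans2 (X + Y) = ptrans2 X + ptrans2 Y := rfl

lemma ptrans2_smul (c : ℂ) (X : Matrix ((a × b) × (a × b)) ((a × b) × (a × b)) ℂ) :
    ptrans2 (c • X) = c • ptrans2 X := rfl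

lemma ptrans2_kronecker (X Y : Matrix (a × b) (a × b) ℂ) :
    ptrans2 (X ⊗ₖ Y) = ptrans X ⊗ₖ ptrans Y := rfl

end PartialTranspose

theorem doubling_bound_general {a b : Type*} [Fintype a] [Fintype b] [DecidableEq a] [DecidableEq b]
    (Λ H : Matrix (a × b) (a × b) ℂ)
    (hΛpt : ptrans Λ = Λ) (hΛtn : trN Λ ≤ 1)
    (hHΛ : H + ptrans H = Λ)
    (H' : Matrix ((a × b) × (a × b)) ((a × b) × (a × b)) ℂ)
    (hH' : H' = (2 : ℂ)⁻¹ • (H ⊗ₖ Λ + Λ ⊗ₖ H)) :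
    H' + ptrans2 H' = Λ ⊗ₖ Λ ∧ trN H' ≤ trN H := by
  subst hH'
  constructor
  · have hsum : H ⊗ₖ Λ + Λ ⊗ₖ H + (ptrans H ⊗ₖ Λ + Λ ⊗ₖ ptrans H) =
        (H + ptrans H) ⊗ₖ Λ + Λ ⊗ₖ (H + ptrans H) := by
      rw [add_kronecker, kronecker_add]; abel
    rw [ptrans2_smul, ptrans2_add, ptrans2_kronecker, ptrans2_kronecker, hΛpt, ← smul_add, hsum,
      hHΛ, ← two_smul ℂ, smul_smul, inv_mul_cancel₀ two_ne_zero, one_smul]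
  · calc trN ((2 : ℂ)⁻¹ • (H ⊗ₖ Λ + Λ ⊗ₖ H))
        = 2⁻¹ * trN (H ⊗ₖ Λ + Λ ⊗ₖ H) := by rw [trN_smul]; norm_num
      _ ≤ 2⁻¹ * (trN H * trN Λ + trN Λ * trN H) := by
        gcongr
        exact (trN_add_le _ _).trans_eq (by rw [trN_kronecker, trN_kronecker])
      _ = trN H * trN Λ := by ring
      _ ≤ trN H := mul_le_of_le_one_right (trN_nonneg H) hΛtn

theorem doubling_bound {a b : Type*} [Fintype a] [Fintype b] [DecidableEq a] [DecidableEq b]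
    (Λ H : Matrix (a × b) (a × b) ℂ)
    (hΛ : Λ.IsHermitian) (hH : H.IsHermitian)
    (hΛpt : ptrans Λ = Λ) (hΛtn : trN Λ ≤ 1)
    (hHΛ : H + ptrans H = Λ)
    (H' : Matrix ((a × b) × (a × b)) ((a × b) × (a × b)) ℂ)
    (hH' : H' = (2 : ℂ)⁻¹ • (H ⊗ₖ Λ + Λ ⊗ₖ H)) :
    H' + ptrans2 H' = Λ ⊗ₖ Λ ∧ trN H' ≤ trN H :=
  doubling_bound_general Λ H hΛpt hΛtn hHΛ H' hH'
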